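/- arXiv:2405.11038 — 13 statements merged into one kernel-verified Lean document; each statement's English description precedes it below -/
import Mathlib

section
/- A category C has at most one full replete subcategory of trivial objects: if Z and Y are two full replete subcategories of C, each posetal, monocoreflective, and with coreflector inverting monomorphisms, then Z and Y have the same objects (every object of Y belongs to Z and conversely). -/
open CategoryTheory CategoryTheory.Limits

universe v u

/-- A class of objects `Z` of `C` determines a posetal monocoreflective full
subcategory whose coreflector inverts monomorphisms. -/
def IsTrivialClass {C : Type u} [Category.{v} C] (Z : C → Prop) : Prop :=
  (∀ X Y : ObjectProperty.FullSubcategory Z, Subsingleton (X ⟶ Y)) ∧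
  ∃ (R : C ⥤ ObjectProperty.FullSubcategory Z) (adj : ObjectProperty.ι Z ⊣ R),
    (∀ A : C, Mono (adj.counit.app A)) ∧
    (∀ (A B : C) (m : A ⟶ B), Mono m → IsIso (R.map m))

lemma trivial_mono_aux {C : Type u} [Category.{v} C] (Z Y : C → Prop)
    (hZrep : ∀ {A B : C}, (A ≅ B) → Z A → Z B)
    (hZ : IsTrivialClass Z) (hY : IsTrivialClass Y) :
    ∀ X : C, Y X → Z X := by
  obtain ⟨hZpos, RZ, adjZ, hZmono, hZinv⟩ := hZ
  obtain ⟨hYpos, RY, adjY, hYmono, hYinv⟩ := hY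
  intro X hX
  -- the Y-counit at X is an iso since X ∈ Y
  have hsplit : IsSplitEpi (adjY.counit.app X) :=
    IsSplitEpi.mk' ⟨(ObjectProperty.ι Y).map (adjY.unit.app ⟨X, hX⟩),
      adjY.left_triangle_components ⟨X, hX⟩⟩
  haveI : Mono (adjY.counit.app X) := hYmono X
  haveI h1 : IsIso (adjY.counit.app X) := isIso_of_mono_of_isSplitEpi _
  -- the Z-counit at X
  set mZ := adjZ.counit.app X with hmZ
  haveI : Mono mZ := hZmono X
  haveI : IsIso (RY.map mZ) := hYinv _ _ mZ (hZmono X)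
  -- a section of mZ
  let s : X ⟶ (ObjectProperty.ι Z).obj (RZ.obj X) :=
    inv (adjY.counit.app X) ≫ (ObjectProperty.ι Y).map (inv (RY.map mZ)) ≫
      adjY.counit.app ((ObjectProperty.ι Z).obj (RZ.obj X))
  have hsec : s ≫ mZ = 𝟙 X :=
    congrArg (fun f : (⟨X, hX⟩ : ObjectProperty.FullSubcategory Y) ⟶ ⟨X, hX⟩ => f.hom)
      (@Subsingleton.elim ((⟨X, hX⟩ : ObjectProperty.FullSubcategory Y) ⟶ ⟨X, hX⟩) (hYpos _ _)
        (ObjectProperty.homMk (s ≫ mZ)) (ObjectProperty.homMk (𝟙 X)))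
  haveI : IsIso mZ := haveI : IsSplitEpi mZ := IsSplitEpi.mk' ⟨s, hsec⟩; isIso_of_mono_of_isSplitEpi mZ
  exact hZrep (asIso mZ) (RZ.obj X).property

/-- A category has at most one full replete subcategory of trivial objects: two
full replete subcategories, each posetal, monocoreflective, and with coreflector
inverting monomorphisms, have the same objects. -/
theorem statement1 {C : Type u} [Category.{v} C] (Z Y : C → Prop)
    (hZrep : ∀ {A B : C}, (A ≅ B) → Z A → Z B)
    (hYrep : ∀ {A B : C}, (A ≅ B) → Y A → Y B)
    (hZ : IsTrivialClass Z) (hY : IsTrivialClass Y) :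
    ∀ X : C, Z X ↔ Y X := by
  intro X
  exact ⟨fun h => trivial_mono_aux Y Z hYrep hY hZ X h,
         fun h => trivial_mono_aux Z Y hZrep hZ hY X h⟩
end

section
/- Every morphism f : A → Z of C whose codomain Z is a trivial object is a strong epimorphism. -/
open CategoryTheory CategoryTheory.Limits

universe v u

/-- A full subcategory of "trivial" objects, given by a predicate `Z` on objects,
satisfying conditions (i)-(iii):
(i) every object `A` has a monomorphism `ε A : zpart A ⟶ A` with `zpart A` trivial,
unique up to isomorphism among monomorphisms into `A` with trivial domain;
(ii) for every `A` and trivial `W`, `Hom(W, A)` has at most one element;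
(iii) for every monomorphism `z : W ⟶ A` and morphism `z' : W' ⟶ A` with `W, W'`
trivial, there is a unique `φ : W' ⟶ W` with `φ ≫ z = z'`. -/
structure TrivialObjects (C : Type u) [Category.{v} C] where
  Z : C → Prop
  zpart : C → C
  zpart_mem : ∀ A : C, Z (zpart A)
  ε : ∀ A : C, zpart A ⟶ A
  ε_mono : ∀ A : C, Mono (ε A)
  zsub_uniq : ∀ (A W : C), Z W → ∀ (e : W ⟶ A), Mono e →
    ∃ φ : W ≅ zpart A, φ.hom ≫ ε A = e
  posetal : ∀ (W A : C), Z W → ∀ f g : W ⟶ A, f = g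
  zlift : ∀ (W A : C) (z : W ⟶ A), Mono z → Z W →
    ∀ (W' : C) (z' : W' ⟶ A), Z W' → ∃! φ : W' ⟶ W, φ ≫ z = z'

variable {C : Type u} [Category.{v} C]

/-- `N_Z`: the class of morphisms factoring through a trivial object. -/
def InNZ (T : TrivialObjects C) {A B : C} (f : A ⟶ B) : Prop :=
  ∃ (W : C) (_ : T.Z W) (p : A ⟶ W) (i : W ⟶ B), p ≫ i = f

/-- `k : K ⟶ A` is a `Z`-kernel of `f : A ⟶ B` if `k ≫ f ∈ N_Z` and every
`e : E ⟶ A` with `e ≫ f ∈ N_Z` factors uniquely through `k`. -/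
def IsZKernel (T : TrivialObjects C) {K A B : C} (k : K ⟶ A) (f : A ⟶ B) : Prop :=
  InNZ T (k ≫ f) ∧ ∀ (E : C) (e : E ⟶ A), InNZ T (e ≫ f) → ∃! φ : E ⟶ K, φ ≫ k = e

/-- A sequence `K --k--> A --f--> B` is short `Z`-exact if `f` is a regular
epimorphism and `k` is a `Z`-kernel of `f`. -/
def ShortZExact (T : TrivialObjects C) {K A B : C} (k : K ⟶ A) (f : A ⟶ B) : Prop :=
  Nonempty (RegularEpi f) ∧ IsZKernel T k f

/-- Every morphism factors as a regular epimorphism followed by a monomorphism. -/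
def RegEpiMonoFact (C : Type u) [Category.{v} C] : Prop :=
  ∀ {X Y : C} (f : X ⟶ Y), ∃ (I : C) (p : X ⟶ I) (i : I ⟶ Y),
    Nonempty (RegularEpi p) ∧ Mono i ∧ p ≫ i = f

/-- Regular epimorphisms are stable under pullback. -/
def RegEpiPullbackStable (C : Type u) [Category.{v} C] : Prop :=
  ∀ {P X Y W : C} (fst : P ⟶ X) (snd : P ⟶ Y) (f : X ⟶ W) (g : Y ⟶ W),
    IsPullback fst snd f g → Nonempty (RegularEpi g) → Nonempty (RegularEpi fst)

/-- Protomodularity property (P1): in a commutative diagram of two horizontally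
composed squares, if the left square and the outer rectangle are pullbacks and the
middle vertical morphism is a regular epimorphism, then the right square is a
pullback. -/
def ProtoP1 (C : Type u) [Category.{v} C] : Prop :=
  ∀ {A B X A' B' X' : C} (f : A ⟶ B) (g : B ⟶ X) (f' : A' ⟶ B') (g' : B' ⟶ X')
    (a : A ⟶ A') (b : B ⟶ B') (c : X ⟶ X'),
    g ≫ c = b ≫ g' →
    IsPullback f a b f' → IsPullback (f ≫ g) a c (f' ≫ g') →
    Nonempty (RegularEpi b) → IsPullback g b c g'

/-- Protomodularity property (P2): pullbacks reflect monomorphisms; if the pullback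
`fst` of `g` along some morphism `f` is a monomorphism, then `g` is a monomorphism. -/
def ProtoP2 (C : Type u) [Category.{v} C] : Prop :=
  ∀ {P X Y W : C} (fst : P ⟶ X) (snd : P ⟶ Y) (f : X ⟶ W) (g : Y ⟶ W),
    IsPullback fst snd f g → Mono fst → Mono g

/-- Every morphism whose codomain is a trivial object is a strong epimorphism. -/
theorem statement2 (T : TrivialObjects C) {A W : C} (hW : T.Z W) (f : A ⟶ W) :
    StrongEpi f := by
  constructor
  · exact ⟨fun g h _ => T.posetal W _ hW g h⟩
  · intro X Y z hz
    constructor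
    intro u v sq
    have hmono : Mono (T.ε X ≫ z) := by
      haveI := T.ε_mono X
      exact mono_comp _ _
    obtain ⟨φ, hφ, -⟩ := T.zlift (T.zpart X) Y (T.ε X ≫ z) hmono (T.zpart_mem X) W v hW
    refine ⟨⟨⟨φ ≫ T.ε X, ?_, by rw [Category.assoc, hφ]⟩⟩⟩
    have : (f ≫ φ ≫ T.ε X) ≫ z = u ≫ z := by
      rw [Category.assoc, Category.assoc, hφ, sq.w]
    exact (cancel_mono z).mp this
end

section
/- Let C be a regular category with an initial object 0, and let Z be the full subcategory of those objects Z such that the unique morphism 0 → Z is a regular epimorphism. Then Z satisfies: (i) for every object A of C there exists a monomorphism ε_A : Z(A) ↣ A with Z(A) in Z, unique up to isomorphism among monomorphisms into A with domain in Z; (ii) for every A in C and Z in Z, Hom(Z, A) has at most one element; (iii) for every monomorphism z : Z ↣ A and every morphism z' : Z' → A with Z, Z' in Z, there exists a unique φ : Z' → Z with z∘φ = z'. -/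
open CategoryTheory CategoryTheory.Limits

universe v u

variable {C : Type u} [Category.{v} C]

section Aux

variable {C : Type u} [Category.{v} C] [HasInitial C]

/-- Arrows from a "trivial" object are unique. -/
theorem aux_posetal {W A : C} (hW : Nonempty (RegularEpi (initial.to W)))
    (f g : W ⟶ A) : f = g := by
  obtain ⟨h⟩ := hW
  haveI : Epi (initial.to W) := RegularEpi.epi _ h
  rw [← cancel_epi (initial.to W)]
  exact initial.hom_ext _ _

/-- Any monomorphism into a trivial object is an isomorphism. -/
theorem aux_mono_iso {I B : C} (hB : Nonempty (RegularEpi (initial.to B)))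
    (i : I ⟶ B) [Mono i] : IsIso i := by
  obtain ⟨h⟩ := hB
  haveI : Epi (initial.to B) := RegularEpi.epi _ h
  have hle : h.left ≫ initial.to I = h.right ≫ initial.to I := by
    rw [← cancel_mono i, Category.assoc, Category.assoc,
      initial.hom_ext (initial.to I ≫ i) (initial.to B)]
    exact h.w
  let d : B ⟶ I := Cofork.IsColimit.desc h.isColimit (initial.to I) hle
  have hd : initial.to B ≫ d = initial.to I :=
    Cofork.IsColimit.π_desc' h.isColimit (initial.to I) hle
  have hdi : d ≫ i = 𝟙 B := by
    rw [← cancel_epi (initial.to B), ← Category.assoc, hd, Category.comp_id]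
    exact initial.hom_ext _ _
  haveI : IsSplitEpi i := IsSplitEpi.mk' ⟨d, hdi⟩
  exact isIso_of_mono_of_isSplitEpi i

/-- Condition (iii). -/
theorem aux_zlift [HasFiniteLimits C]
    (W A : C) (z : W ⟶ A) (hz : Mono z) (hW : Nonempty (RegularEpi (initial.to W)))
    (W' : C) (z' : W' ⟶ A) (hW' : Nonempty (RegularEpi (initial.to W'))) :
    ∃! φ : W' ⟶ W, φ ≫ z = z' := by
  haveI := hz
  let P := pullback z' z
  haveI : Mono (pullback.fst z' z) := inferInstance
  haveI : IsIso (pullback.fst z' z) := aux_mono_iso hW' _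
  refine ⟨inv (pullback.fst z' z) ≫ pullback.snd z' z, ?_, ?_⟩
  · show (inv (pullback.fst z' z) ≫ pullback.snd z' z) ≫ z = z'
    rw [Category.assoc, ← pullback.condition, ← Category.assoc,
      IsIso.inv_hom_id, Category.id_comp]
  · intro ψ _
    exact aux_posetal hW' _ _

end Aux

/-- In a regular category with initial object `0`, the class of objects `W` such
that the unique morphism `0 ⟶ W` is a regular epimorphism satisfies conditions
(i), (ii), (iii). -/
theorem statement5 {C : Type u} [Category.{v} C] [HasFiniteLimits C] [HasInitial C]
    (hfact : RegEpiMonoFact C) (hstab : RegEpiPullbackStable C) :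
    -- (i)
    ((∀ A : C, ∃ (W : C) (_ : Nonempty (RegularEpi (initial.to W))) (e : W ⟶ A),
        Mono e ∧
        ∀ (W' : C) (_ : Nonempty (RegularEpi (initial.to W'))) (e' : W' ⟶ A),
          Mono e' → ∃ φ : W' ≅ W, φ.hom ≫ e = e') ∧
     -- (ii)
     (∀ (A W : C), Nonempty (RegularEpi (initial.to W)) → ∀ f g : W ⟶ A, f = g) ∧
     -- (iii)
     (∀ (W A : C) (z : W ⟶ A), Mono z → Nonempty (RegularEpi (initial.to W)) →
        ∀ (W' : C) (z' : W' ⟶ A), Nonempty (RegularEpi (initial.to W')) →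
          ∃! φ : W' ⟶ W, φ ≫ z = z')) := by

  have zlift := fun (W A : C) (z : W ⟶ A) hz hW W' z' hW' =>
    aux_zlift (C := C) W A z hz hW W' z' hW'
  refine ⟨?_, fun A W hW f g => aux_posetal hW f g, zlift⟩
  intro A
  obtain ⟨I, p, i, ⟨hp⟩, hi, hpi⟩ := hfact (initial.to A)
  haveI := hi
  have hIp : initial.to I = p := initial.hom_ext _ _
  have hI : Nonempty (RegularEpi (initial.to I)) := ⟨hIp ▸ hp⟩
  refine ⟨I, hI, i, hi, ?_⟩
  intro W' hW' e' he'
  haveI := he'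
  obtain ⟨φ, hφ, -⟩ := zlift I A i hi hI W' e' hW'
  obtain ⟨ψ, hψ, -⟩ := zlift W' A e' he' hW' I i hI
  exact ⟨⟨φ, ψ, aux_posetal hW' _ _, aux_posetal hI _ _⟩, hφ⟩
end

section
/- Let C be a category with small products and Z a full subcategory of C satisfying conditions (i)–(iii) below. If Z is essentially small (there is a set of objects of Z meeting every isomorphism class of Z), then C has an initial object; explicitly, the zero part Z(∏_{i∈I} Z_i) of the product of a set of representatives {Z_i | i ∈ I} of the isomorphism classes of Z is initial in C. -/
open CategoryTheory CategoryTheory.Limits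

universe v u

variable {C : Type u} [Category.{v} C]

/-- If `C` has small products and the subcategory of trivial objects is essentially
small, with `F : ι → C` a set of representatives of the isomorphism classes of
trivial objects, then the zero part of the product `∏ᶜ F` is initial in `C`. -/
theorem statement6 {C : Type u} [Category.{v} C] [HasProducts.{v} C]
    (T : TrivialObjects C) {ι : Type v} (F : ι → C)
    (hmem : ∀ i : ι, T.Z (F i))
    (hrep : ∀ W : C, T.Z W → ∃ i : ι, Nonempty (F i ≅ W)) :
    Nonempty (IsInitial (T.zpart (∏ᶜ F))) := by
  have h : ∀ A : C, Nonempty (T.zpart (∏ᶜ F) ⟶ A) := by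
    intro A
    obtain ⟨i, ⟨e⟩⟩ := hrep (T.zpart A) (T.zpart_mem A)
    exact ⟨T.ε (∏ᶜ F) ≫ Pi.π F i ≫ e.hom ≫ T.ε A⟩
  exact ⟨IsInitial.ofUniqueHom (fun A => (h A).some)
    (fun A m => T.posetal _ _ (T.zpart_mem _) _ _)⟩
end

section
/- For every morphism f : A → B of C, a Z-kernel of f exists, and it is given by the pullback projection k : K → A in the pullback square of ε_B : Z(B) ↣ B along f (i.e. K = A ×_B Z(B) and k : K → A is the first projection). -/
open CategoryTheory CategoryTheory.Limits

universe v u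

variable {C : Type u} [Category.{v} C]

/-- For every morphism `f : A ⟶ B`, the `Z`-kernel of `f` exists and is given by
the pullback projection `pullback.fst f (T.ε B) : A ×_B Z(B) ⟶ A` of
`ε_B : Z(B) ⟶ B` along `f`. -/
theorem statement7 [HasPullbacks C] (T : TrivialObjects C) {A B : C} (f : A ⟶ B) :
    IsZKernel T (pullback.fst f (T.ε B)) f := by
  constructor
  · exact ⟨T.zpart B, T.zpart_mem B, pullback.snd f (T.ε B), T.ε B, (pullback.condition).symm⟩
  · intro E e ⟨W, hW, p, i, hpi⟩
    obtain ⟨φ, hφ, -⟩ := T.zlift (T.zpart B) B (T.ε B) (T.ε_mono B) (T.zpart_mem B) W i hW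
    have hcomm : e ≫ f = (p ≫ φ) ≫ T.ε B := by
      rw [Category.assoc, hφ, hpi]
    haveI := T.ε_mono B
    haveI : Mono (pullback.fst f (T.ε B)) := pullback.fst_of_mono
    refine ⟨pullback.lift e (p ≫ φ) hcomm, pullback.lift_fst _ _ _, ?_⟩
    intro y hy
    rw [← cancel_mono (pullback.fst f (T.ε B)), hy, pullback.lift_fst]
end

section
/- Consider a pullback square in C with top morphism f : A → B, left morphism h : A → C, right morphism l : B → D and bottom morphism g : C → D, and suppose the induced morphism Z(l) : Z(B) → Z(D) between the zero parts is an isomorphism. Then the Z-kernels of f and of g are isomorphic: if k : K(f) → A is a Z-kernel of f and n : K(g) → C is a Z-kernel of g, there is an isomorphism φ : K(f) → K(g) with n∘φ = h∘k. -/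
open CategoryTheory CategoryTheory.Limits

universe v u

variable {C : Type u} [Category.{v} C]

/-- In a pullback square (top `f`, left `h`, right `l`, bottom `g`) in which the
induced morphism `Z(l)` between zero parts is an isomorphism, the `Z`-kernels of
`f` and of `g` are isomorphic. -/
theorem statement8 [HasPullbacks C] (T : TrivialObjects C)
    {A B X D Kf Kg : C} (f : A ⟶ B) (h : A ⟶ X) (l : B ⟶ D) (g : X ⟶ D)
    (hpb : IsPullback f h l g)
    (hZl : ∃ zl : T.zpart B ⟶ T.zpart D, zl ≫ T.ε D = T.ε B ≫ l ∧ IsIso zl)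
    (k : Kf ⟶ A) (hk : IsZKernel T k f)
    (n : Kg ⟶ X) (hn : IsZKernel T n g) :
    ∃ φ : Kf ≅ Kg, φ.hom ≫ n = k ≫ h := by
  obtain ⟨zl, hzl, hzliso⟩ := hZl
  have hεD : Mono (T.ε D) := T.ε_mono D
  -- `k ≫ h` is a Z-kernel of `g`.
  have hkh : IsZKernel T (k ≫ h) g := by
    constructor
    · obtain ⟨W, hW, p, i, hpi⟩ := hk.1
      refine ⟨W, hW, p, i ≫ l, ?_⟩
      rw [← Category.assoc, hpi, Category.assoc, Category.assoc, hpb.w, ← Category.assoc]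
    · intro E e he
      obtain ⟨W, hW, p, i, hpi⟩ := he
      obtain ⟨ψ, hψ, -⟩ := T.zlift (T.zpart D) D (T.ε D) hεD (T.zpart_mem D) W i hW
      have hinv : inv zl ≫ T.ε B ≫ l = T.ε D := by
        rw [← hzl, ← Category.assoc, IsIso.inv_hom_id, Category.id_comp]
      set b : E ⟶ B := p ≫ ψ ≫ inv zl ≫ T.ε B with hb
      have hbl : b ≫ l = e ≫ g := by
        rw [hb]
        simp only [Category.assoc, hinv, hψ, hpi]
      set a : E ⟶ A := hpb.lift b e hbl with ha
      have haf : a ≫ f = b := hpb.lift_fst b e hbl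
      have hah : a ≫ h = e := hpb.lift_snd b e hbl
      have hanz : InNZ T (a ≫ f) :=
        ⟨T.zpart B, T.zpart_mem B, p ≫ ψ ≫ inv zl, T.ε B, by
          simp only [Category.assoc]; rw [haf, hb]⟩
      obtain ⟨φ₀, hφ₀, hφuniq⟩ := hk.2 E a hanz
      refine ⟨φ₀, by show φ₀ ≫ k ≫ h = e; rw [← Category.assoc, hφ₀, hah], ?_⟩
      intro y hy
      -- show `y ≫ k = a` using pullback uniqueness
      obtain ⟨W₀, hW₀, p₀, i₀, hpi₀⟩ := hk.1
      obtain ⟨ψ₀, hψ₀, -⟩ := T.zlift (T.zpart B) B (T.ε B) (T.ε_mono B) (T.zpart_mem B) W₀ i₀ hW₀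
      have hqkf : (y ≫ k) ≫ f = (y ≫ p₀ ≫ ψ₀) ≫ T.ε B := by
        simp only [Category.assoc, hψ₀]
        rw [← Category.assoc, ← Category.assoc, Category.assoc y p₀ i₀, hpi₀]
        simp [Category.assoc]
      have hq : (y ≫ p₀ ≫ ψ₀) = (p ≫ ψ ≫ inv zl) := by
        have hmono : Mono (zl ≫ T.ε D) := by
          haveI := hzliso; haveI := hεD; exact mono_comp _ _
        rw [← cancel_mono (zl ≫ T.ε D)]
        rw [hzl]
        have h1 : ((y ≫ p₀ ≫ ψ₀) ≫ T.ε B) ≫ l = e ≫ g := by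
          rw [← hqkf, Category.assoc, Category.assoc, hpb.w, ← Category.assoc,
            ← Category.assoc, Category.assoc y k h, hy]
        have h2 : ((p ≫ ψ ≫ inv zl) ≫ T.ε B) ≫ l = e ≫ g := by
          rw [← hbl, hb]; simp only [Category.assoc]
        simp only [← Category.assoc] at h1 h2 ⊢
        rw [h1, h2]
      have hyka : y ≫ k = a := by
        apply hpb.hom_ext
        · rw [hqkf, hq, haf, hb]
          simp only [Category.assoc]
        · rw [Category.assoc, hy, hah]
      exact hφuniq y hyka
  -- two Z-kernels of `g` are isomorphic
  obtain ⟨α, hα, -⟩ := hkh.2 Kg n hn.1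
  obtain ⟨β, hβ, -⟩ := hn.2 Kf (k ≫ h) hkh.1
  have h1 : β ≫ α = 𝟙 Kf := by
    obtain ⟨u, hu, huniq⟩ := hkh.2 Kf (k ≫ h) hkh.1
    rw [huniq (β ≫ α) (by show (β ≫ α) ≫ k ≫ h = k ≫ h; rw [Category.assoc, hα, hβ]),
      huniq (𝟙 Kf) (Category.id_comp _)]
  have h2 : α ≫ β = 𝟙 Kg := by
    obtain ⟨u, hu, huniq⟩ := hn.2 Kg n hn.1
    rw [huniq (α ≫ β) (by show (α ≫ β) ≫ n = n; rw [Category.assoc, hβ, hα]),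
      huniq (𝟙 Kg) (Category.id_comp _)]
  exact ⟨⟨β, α, h1, h2⟩, hβ⟩
end

section
/- Consider a commutative square in C with top morphism f : A → B a regular epimorphism, left morphism h : A → C, right morphism l : B → D and bottom morphism g : C → D. Suppose the induced morphism Z(l) : Z(B) → Z(D) between zero parts is an isomorphism, and that the Z-kernels of f and g are isomorphic compatibly: there are Z-kernels k : K(f) → A of f and n : K(g) → C of g and an isomorphism φ : K(f) → K(g) with n∘φ = h∘k. Then the square is a pullback. -/
open CategoryTheory CategoryTheory.Limits

universe v u

variable {C : Type u} [Category.{v} C]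

/-- In a regular protomodular category, a commutative square (top `f`, left `h`,
right `l`, bottom `g`) with `f` a regular epimorphism, `Z(l)` an isomorphism, and
compatibly isomorphic `Z`-kernels of `f` and `g`, is a pullback. -/
theorem statement9 [HasFiniteLimits C]
    (hfact : RegEpiMonoFact C) (hstab : RegEpiPullbackStable C) (hP1 : ProtoP1 C)
    (T : TrivialObjects C)
    {A B X D Kf Kg : C} (f : A ⟶ B) (h : A ⟶ X) (l : B ⟶ D) (g : X ⟶ D)
    (hcomm : f ≫ l = h ≫ g) (hf : Nonempty (RegularEpi f))
    (hZl : ∃ zl : T.zpart B ⟶ T.zpart D, zl ≫ T.ε D = T.ε B ≫ l ∧ IsIso zl)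
    (k : Kf ⟶ A) (hk : IsZKernel T k f)
    (n : Kg ⟶ X) (hn : IsZKernel T n g)
    (φ : Kf ≅ Kg) (hφ : φ.hom ≫ n = k ≫ h) :
    IsPullback f h l g := by
  
  obtain ⟨zl, hzl, hzliso⟩ := hZl
  haveI := T.ε_mono B
  haveI := T.ε_mono D
  haveI := hzliso
  -- cancellation of morphisms into `zpart B` after composing with `ε B ≫ l`
  have cancel : ∀ {E : C} (v₁ v₂ : E ⟶ T.zpart B),
      v₁ ≫ (T.ε B ≫ l) = v₂ ≫ (T.ε B ≫ l) → v₁ = v₂ := by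
    intro E v₁ v₂ hv
    rw [← hzl, ← Category.assoc, ← Category.assoc] at hv
    exact (cancel_mono zl).1 ((cancel_mono (T.ε D)).1 hv)
  -- every `N_Z` morphism into `B` factors through `ε B`
  have factB : ∀ {E : C} (u : E ⟶ B), InNZ T u → ∃ v : E ⟶ T.zpart B, v ≫ T.ε B = u := by
    intro E u hu
    obtain ⟨W, hW, p, i, hpi⟩ := hu
    obtain ⟨ψ, hψ, -⟩ := T.zlift (T.zpart B) B (T.ε B) (T.ε_mono B) (T.zpart_mem B) W i hW
    exact ⟨p ≫ ψ, by rw [Category.assoc, hψ, hpi]⟩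
  -- the comparison `a : Kf ⟶ zpart B`
  obtain ⟨a, haε⟩ := factB (k ≫ f) hk.1
  -- the left square is a pullback
  have left : IsPullback k a f (T.ε B) := by
    apply IsPullback.of_isLimit' ⟨haε.symm⟩
    apply PullbackCone.IsLimit.mk
    case lift =>
      intro s
      exact (hk.2 s.pt s.fst ⟨T.zpart B, T.zpart_mem B, s.snd, T.ε B,
        s.condition.symm⟩).exists.choose
    case fac_left =>
      intro s
      exact (hk.2 s.pt s.fst ⟨T.zpart B, T.zpart_mem B, s.snd, T.ε B,
        s.condition.symm⟩).exists.choose_spec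
    case fac_right =>
      intro s
      have hc := (hk.2 s.pt s.fst ⟨T.zpart B, T.zpart_mem B, s.snd, T.ε B,
        s.condition.symm⟩).exists.choose_spec
      apply (cancel_mono (T.ε B)).1
      rw [Category.assoc, haε, ← Category.assoc, hc, s.condition]
    case uniq =>
      intro s m hm₁ _
      obtain ⟨w, hw, huniq⟩ := hk.2 s.pt s.fst ⟨T.zpart B, T.zpart_mem B, s.snd, T.ε B,
        s.condition.symm⟩
      rw [huniq _ hm₁,
        huniq _ (hk.2 s.pt s.fst ⟨T.zpart B, T.zpart_mem B, s.snd, T.ε B,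
          s.condition.symm⟩).exists.choose_spec]
  -- the outer rectangle is a pullback
  have outer : IsPullback (k ≫ h) a g (T.ε B ≫ l) := by
    have wcomm : (k ≫ h) ≫ g = a ≫ T.ε B ≫ l := by
      rw [← Category.assoc a, haε, Category.assoc, Category.assoc, hcomm]
    apply IsPullback.of_isLimit' ⟨wcomm⟩
    have hNZ : ∀ s : PullbackCone g (T.ε B ≫ l), InNZ T (s.fst ≫ g) := by
      intro s
      exact ⟨T.zpart D, T.zpart_mem D, s.snd ≫ zl, T.ε D, by
        rw [Category.assoc, hzl, ← s.condition]⟩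
    apply PullbackCone.IsLimit.mk
    case lift =>
      intro s
      exact (hn.2 s.pt s.fst (hNZ s)).exists.choose ≫ φ.inv
    case fac_left =>
      intro s
      have hc := (hn.2 s.pt s.fst (hNZ s)).exists.choose_spec
      rw [← hφ]
      simp only [Category.assoc, Iso.inv_hom_id_assoc]
      exact hc
    case fac_right =>
      intro s
      have hc := (hn.2 s.pt s.fst (hNZ s)).exists.choose_spec
      apply cancel
      set ψ' := (hn.2 s.pt s.fst (hNZ s)).exists.choose with hψ'
      calc ((ψ' ≫ φ.inv) ≫ a) ≫ (T.ε B ≫ l)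
          = (ψ' ≫ φ.inv) ≫ (a ≫ T.ε B) ≫ l := by
            simp only [Category.assoc]
        _ = (ψ' ≫ φ.inv) ≫ (k ≫ h) ≫ g := by
            rw [haε]; simp only [Category.assoc]; rw [hcomm]
        _ = ψ' ≫ n ≫ g := by
            rw [← hφ]; simp only [Category.assoc, Iso.inv_hom_id_assoc]
        _ = s.fst ≫ g := by rw [← Category.assoc, hc]
        _ = s.snd ≫ (T.ε B ≫ l) := s.condition
    case uniq =>
      intro s m hm₁ _
      obtain ⟨w, hw, huniq⟩ := hn.2 s.pt s.fst (hNZ s)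
      have hmw : m ≫ φ.hom = w := by
        apply huniq
        rw [Category.assoc, hφ]
        exact hm₁
      rw [huniq _ (hn.2 s.pt s.fst (hNZ s)).exists.choose_spec, ← hmw,
        Category.assoc, Iso.hom_inv_id, Category.comp_id]
  -- apply protomodularity (P1)
  exact (hP1 k h (T.ε B) l a f g hcomm.symm left outer hf).flip
end

section
/- Let f : A → B be a morphism of C such that the induced morphism Z(f) : Z(A) → Z(B) between zero parts is an isomorphism. Then f is a monomorphism if and only if the counit ε_A : Z(A) ↣ A is a Z-kernel of f. -/
open CategoryTheory CategoryTheory.Limits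

universe v u

variable {C : Type u} [Category.{v} C]

/-- In a regular protomodular category, a morphism `f : A ⟶ B` whose induced
morphism `Z(f)` between zero parts is an isomorphism is a monomorphism if and only
if `ε_A : Z(A) ⟶ A` is a `Z`-kernel of `f`. -/
theorem statement10 [HasFiniteLimits C]
    (hfact : RegEpiMonoFact C) (hstab : RegEpiPullbackStable C) (hP2 : ProtoP2 C)
    (T : TrivialObjects C) {A B : C} (f : A ⟶ B)
    (hZf : ∃ zf : T.zpart A ⟶ T.zpart B, zf ≫ T.ε B = T.ε A ≫ f ∧ IsIso zf) :
    Mono f ↔ IsZKernel T (T.ε A) f := by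
  obtain ⟨zf, hzf, hiso⟩ := hZf
  haveI := hiso
  haveI := T.ε_mono A
  haveI := T.ε_mono B
  constructor
  · intro hf
    haveI := hf
    constructor
    · exact ⟨T.zpart A, T.zpart_mem A, 𝟙 _, T.ε A ≫ f, by simp⟩
    · rintro E e ⟨W, hW, p, i, hpi⟩
      obtain ⟨ψ, hψ, -⟩ :=
        T.zlift (T.zpart B) B (T.ε B) (T.ε_mono B) (T.zpart_mem B) W i hW
      refine ⟨p ≫ ψ ≫ inv zf, ?_, ?_⟩
      · have h1 : ((p ≫ ψ ≫ inv zf) ≫ T.ε A) ≫ f = e ≫ f := by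
          have : inv zf ≫ T.ε A ≫ f = T.ε B := by
            rw [← hzf, ← Category.assoc, IsIso.inv_hom_id, Category.id_comp]
          simp only [Category.assoc]
          rw [this, hψ, hpi]
        exact (cancel_mono f).mp h1
      · intro y hy
        have : (p ≫ ψ ≫ inv zf) ≫ T.ε A = e := by
          apply (cancel_mono f).mp
          have : inv zf ≫ T.ε A ≫ f = T.ε B := by
            rw [← hzf, ← Category.assoc, IsIso.inv_hom_id, Category.id_comp]
          simp only [Category.assoc]
          rw [this, hψ, hpi]
        exact (cancel_mono (T.ε A)).mp (hy.trans this.symm)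
  · intro hk
    have hpb := IsPullback.of_hasPullback (T.ε B) f
    have hNZ : InNZ T (pullback.snd (T.ε B) f ≫ f) :=
      ⟨T.zpart B, T.zpart_mem B, pullback.fst (T.ε B) f, T.ε B,
        pullback.condition⟩
    obtain ⟨φ, hφ, -⟩ := hk.2 _ _ hNZ
    have hmono : Mono (pullback.fst (T.ε B) f) := by
      constructor
      intro E a b hab
      have key : ∀ c : E ⟶ pullback (T.ε B) f,
          (c ≫ φ ≫ zf) ≫ T.ε B = c ≫ pullback.fst (T.ε B) f ≫ T.ε B := by
        intro c
        simp only [Category.assoc]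
        rw [hzf, pullback.condition, ← hφ]
        simp [Category.assoc]
      have hφab : a ≫ φ = b ≫ φ := by
        have h3 : (a ≫ φ ≫ zf) ≫ T.ε B = (b ≫ φ ≫ zf) ≫ T.ε B := by
          rw [key a, key b, ← Category.assoc, ← Category.assoc, hab]
        have h4 := (cancel_mono (T.ε B)).mp h3
        have h5 : (a ≫ φ) ≫ zf = (b ≫ φ) ≫ zf := by
          simpa [Category.assoc] using h4
        exact (cancel_mono zf).mp h5
      apply pullback.hom_ext
      · exact hab
      · rw [← hφ, ← Category.assoc, ← Category.assoc, hφab]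
    exact hP2 _ _ _ _ hpb hmono
end

section
/- In a regular category, consider a commutative diagram of two horizontally composed squares: top row A → B → C (morphisms f, g), bottom row A' → B' → C' (morphisms f', g'), vertical morphisms a : A → A', b : B → B', c : C → C', with b∘f = f'∘a and c∘g = g'∘b. If the left square (1) and the outer rectangle (1)+(2) are pullbacks and f' is a regular epimorphism, then the right square (2) is a pullback. -/
open CategoryTheory CategoryTheory.Limits

universe v u

variable {C : Type u} [Category.{v} C]

/-- In a regular category, given two horizontally composed commutative squares,
if the left square and the outer rectangle are pullbacks and the bottom-left
horizontal morphism `f'` is a regular epimorphism, then the right square is a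
pullback. -/
theorem statement12 [HasFiniteLimits C]
    (hfact : RegEpiMonoFact C) (hstab : RegEpiPullbackStable C)
    {A B X A' B' X' : C} (f : A ⟶ B) (g : B ⟶ X) (f' : A' ⟶ B') (g' : B' ⟶ X')
    (a : A ⟶ A') (b : B ⟶ B') (c : X ⟶ X')
    (hsq2 : g ≫ c = b ≫ g')
    (hleft : IsPullback f a b f')
    (houter : IsPullback (f ≫ g) a c (f' ≫ g'))
    (hf' : Nonempty (RegularEpi f')) :
    IsPullback g b c g' := by

  -- Form the pullback of `c` and `g'` and the comparison map `u`.
  have hP : IsPullback (pullback.fst c g') (pullback.snd c g') c g' :=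
    IsPullback.of_hasPullback c g'
  set u : B ⟶ pullback c g' := pullback.lift g b hsq2 with hu
  have hu1 : u ≫ pullback.fst c g' = g := pullback.lift_fst _ _ _
  have hu2 : u ≫ pullback.snd c g' = b := pullback.lift_snd _ _ _
  -- The square A → P over f' is a pullback, by cancellation with hP.
  have houter' : IsPullback ((f ≫ u) ≫ pullback.fst c g') a c (f' ≫ g') := by
    rw [Category.assoc, hu1]; exact houter
  have hAP : IsPullback (f ≫ u) a (pullback.snd c g') f' :=
    IsPullback.of_right houter' (by rw [Category.assoc, hu2, hleft.w]) hP
  -- The square with identity on the left, by vertical cancellation.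
  have hleft' : IsPullback f (𝟙 A ≫ a) (u ≫ pullback.snd c g') f' := by
    rw [Category.id_comp, hu2]; exact hleft
  have hT : IsPullback f (𝟙 A) u (f ≫ u) :=
    IsPullback.of_bot hleft' (by rw [Category.id_comp]) hAP
  -- f ≫ u is a regular epimorphism.
  have hfu : Nonempty (RegularEpi (f ≫ u)) := hstab (f ≫ u) a (pullback.snd c g') f' hAP hf'
  -- u is a monomorphism.
  have humono : Mono u := by
    constructor
    intro T s t hst
    have hQ : IsPullback (pullback.fst (f ≫ u) (s ≫ u)) (pullback.snd (f ≫ u) (s ≫ u))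
        (f ≫ u) (s ≫ u) := IsPullback.of_hasPullback _ _
    have hsndepi : Nonempty (RegularEpi (pullback.snd (f ≫ u) (s ≫ u))) :=
      hstab _ _ _ _ hQ.flip hfu
    obtain ⟨hre⟩ := hsndepi
    haveI := isRegularEpi_of_regularEpi hre
    have w₁ : pullback.fst (f ≫ u) (s ≫ u) ≫ (f ≫ u)
        = (pullback.snd (f ≫ u) (s ≫ u) ≫ s) ≫ u := by
      rw [pullback.condition, Category.assoc]
    have w₂ : pullback.fst (f ≫ u) (s ≫ u) ≫ (f ≫ u)
        = (pullback.snd (f ≫ u) (s ≫ u) ≫ t) ≫ u := by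
      rw [w₁]; simp only [Category.assoc, hst]
    have h₁ := hT.flip.lift_fst _ _ w₁
    have h₂ := hT.flip.lift_snd _ _ w₁
    have h₁' := hT.flip.lift_fst _ _ w₂
    have h₂' := hT.flip.lift_snd _ _ w₂
    rw [Category.comp_id] at h₁ h₁'
    have : pullback.snd (f ≫ u) (s ≫ u) ≫ s = pullback.snd (f ≫ u) (s ≫ u) ≫ t := by
      rw [← h₂, ← h₂', h₁, h₁']
    exact (cancel_epi (pullback.snd (f ≫ u) (s ≫ u))).mp this
  -- u is a strong epimorphism, hence an isomorphism.
  obtain ⟨hfu'⟩ := hfu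
  haveI := isRegularEpi_of_regularEpi hfu'
  haveI : StrongEpi (f ≫ u) := inferInstance
  haveI : StrongEpi u := strongEpi_of_strongEpi f u
  haveI := humono
  haveI : IsIso u := isIso_of_mono_of_strongEpi u
  exact IsPullback.of_iso_pullback ⟨hsq2⟩ (asIso u) hu1 hu2
end

section
/- Consider a commutative diagram in C with rows K → A → B (morphisms k, f) and K' → A' → B' (morphisms k', f') and vertical morphisms u : K → K', a : A → A', b : B → B' (with a∘k = k'∘u and b∘f = f'∘a), in which the top row is a short Z-exact sequence, k' is a Z-kernel of f', and the induced morphism Z(b) : Z(B) → Z(B') between zero parts is an isomorphism. Then the left square (the one formed by k, u, a, k') is a pullback if and only if b is a monomorphism. -/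
open CategoryTheory CategoryTheory.Limits

universe v u

variable {C : Type u} [Category.{v} C]

lemma InNZ.comp_left (T : TrivialObjects C) {X A B : C} (g : X ⟶ A) {f : A ⟶ B}
    (h : InNZ T f) : InNZ T (g ≫ f) := by
  obtain ⟨W, hW, p, i, hpi⟩ := h
  exact ⟨W, hW, g ≫ p, i, by rw [Category.assoc, hpi]⟩

lemma IsZKernel.mono (T : TrivialObjects C) {K A B : C} {k : K ⟶ A} {f : A ⟶ B}
    (h : IsZKernel T k f) : Mono k := by
  constructor
  intro E g g' w
  have hNZ : InNZ T ((g ≫ k) ≫ f) := by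
    rw [Category.assoc]; exact InNZ.comp_left T g h.1
  obtain ⟨φ, hφ, huniq⟩ := h.2 E (g ≫ k) hNZ
  rw [huniq g rfl, huniq g' w.symm]

lemma IsZKernel.isPullback (T : TrivialObjects C) {K A B : C} {k : K ⟶ A} {f : A ⟶ B}
    (h : IsZKernel T k f) :
    ∃ c : K ⟶ T.zpart B, c ≫ T.ε B = k ≫ f ∧ IsPullback k c f (T.ε B) := by
  obtain ⟨W, hW, p, i, hpi⟩ := h.1
  obtain ⟨ψ, hψ, -⟩ := T.zlift (T.zpart B) B (T.ε B) (T.ε_mono B) (T.zpart_mem B) W i hW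
  refine ⟨p ≫ ψ, ?_, ?_⟩
  · rw [Category.assoc, hψ, hpi]
  · have hc : (p ≫ ψ) ≫ T.ε B = k ≫ f := by rw [Category.assoc, hψ, hpi]
    have eq : k ≫ f = (p ≫ ψ) ≫ T.ε B := hc.symm
    apply IsPullback.of_isLimit (PullbackCone.IsLimit.mk eq
      (fun s => (h.2 s.pt s.fst ⟨T.zpart B, T.zpart_mem B, s.snd, T.ε B, s.condition.symm⟩).choose)
      (fun s => (h.2 s.pt s.fst ⟨T.zpart B, T.zpart_mem B, s.snd, T.ε B, s.condition.symm⟩).choose_spec.1)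
      ?_ ?_)
    · intro s
      haveI := T.ε_mono B
      rw [← cancel_mono (T.ε B)]
      have h1 := (h.2 s.pt s.fst ⟨T.zpart B, T.zpart_mem B, s.snd, T.ε B, s.condition.symm⟩).choose_spec.1
      rw [Category.assoc, hc, ← Category.assoc, h1, s.condition]
    · intro s m hm _
      exact (h.2 s.pt s.fst ⟨T.zpart B, T.zpart_mem B, s.snd, T.ε B, s.condition.symm⟩).choose_spec.2 m hm

/-- Given a morphism `(u, a, b)` of sequences in which the top row is short
`Z`-exact, `k'` is a `Z`-kernel of `f'`, and `Z(b)` is an isomorphism, the left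
square is a pullback if and only if `b` is a monomorphism. -/
theorem statement13 [HasFiniteLimits C]
    (hfact : RegEpiMonoFact C) (hstab : RegEpiPullbackStable C) (hP2 : ProtoP2 C)
    (T : TrivialObjects C)
    {K A B K' A' B' : C} (k : K ⟶ A) (f : A ⟶ B) (k' : K' ⟶ A') (f' : A' ⟶ B')
    (u : K ⟶ K') (a : A ⟶ A') (b : B ⟶ B')
    (hsq1 : k ≫ a = u ≫ k') (hsq2 : f ≫ b = a ≫ f')
    (hrow : ShortZExact T k f) (hk' : IsZKernel T k' f')
    (hZb : ∃ zb : T.zpart B ⟶ T.zpart B', zb ≫ T.ε B' = T.ε B ≫ b ∧ IsIso zb) :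
    IsPullback k u a k' ↔ Mono b := by
  obtain ⟨zb, hzb, hiso⟩ := hZb
  haveI : IsIso zb := hiso
  haveI hεB' : Mono (T.ε B') := T.ε_mono B'
  haveI hεB : Mono (T.ε B) := T.ε_mono B
  constructor
  · -- pullback ⇒ mono b
    intro hpb
    obtain ⟨c, hc, pb1⟩ := IsZKernel.isPullback T hrow.2
    obtain ⟨c', hc', pb2⟩ := IsZKernel.isPullback T hk'
    have outer : IsPullback k (u ≫ c') (f ≫ b) (T.ε B') := by
      rw [hsq2]; exact hpb.paste_vert pb2
    have pbD : IsPullback (pullback.fst b (T.ε B')) (pullback.snd b (T.ε B')) b (T.ε B') :=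
      IsPullback.of_hasPullback b (T.ε B')
    have wm : (k ≫ f) ≫ b = (u ≫ c') ≫ T.ε B' := by
      rw [Category.assoc]; exact outer.w
    set m : K ⟶ pullback b (T.ε B') := pullback.lift (k ≫ f) (u ≫ c') wm with hm
    have hmfst : m ≫ pullback.fst b (T.ε B') = k ≫ f := pullback.lift_fst _ _ _
    have hmsnd : m ≫ pullback.snd b (T.ε B') = u ≫ c' := pullback.lift_snd _ _ _
    have outer' : IsPullback k (m ≫ pullback.snd b (T.ε B')) (f ≫ b) (T.ε B') := by
      rw [hmsnd]; exact outer
    have left : IsPullback k m f (pullback.fst b (T.ε B')) :=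
      IsPullback.of_bot outer' hmfst.symm pbD
    have regm : Nonempty (RegularEpi m) :=
      hstab m k (pullback.fst b (T.ε B')) f left.flip hrow.1
    have wζ : T.ε B ≫ b = zb ≫ T.ε B' := hzb.symm
    set ζ : T.zpart B ⟶ pullback b (T.ε B') := pullback.lift (T.ε B) zb wζ with hζ
    have hζfst : ζ ≫ pullback.fst b (T.ε B') = T.ε B := pullback.lift_fst _ _ _
    have hζsnd : ζ ≫ pullback.snd b (T.ε B') = zb := pullback.lift_snd _ _ _
    have hcz : u ≫ c' = c ≫ zb := by
      rw [← cancel_mono (T.ε B')]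
      calc (u ≫ c') ≫ T.ε B' = u ≫ (c' ≫ T.ε B') := by rw [Category.assoc]
        _ = u ≫ (k' ≫ f') := by rw [hc']
        _ = (u ≫ k') ≫ f' := by rw [Category.assoc]
        _ = (k ≫ a) ≫ f' := by rw [hsq1]
        _ = k ≫ (f ≫ b) := by rw [Category.assoc, ← hsq2]
        _ = (c ≫ T.ε B) ≫ b := by rw [← Category.assoc, hc]
        _ = c ≫ (zb ≫ T.ε B') := by rw [Category.assoc, ← hzb]
        _ = (c ≫ zb) ≫ T.ε B' := by rw [Category.assoc]
    have hmζ : m = c ≫ ζ := by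
      apply pullback.hom_ext
      · rw [hmfst, Category.assoc, hζfst, hc]
      · rw [hmsnd, Category.assoc, hζsnd, hcz]
    haveI : RegularEpi m := regm.some
    haveI hem : Epi m := RegularEpi.epi m regm.some
    have heζ : Epi ζ := by
      haveI : Epi (c ≫ ζ) := hmζ ▸ hem
      exact epi_of_epi c ζ
    have hζr : ζ ≫ (pullback.snd b (T.ε B') ≫ inv zb) = 𝟙 _ := by
      rw [← Category.assoc, hζsnd, IsIso.hom_inv_id]
    have hrζ : (pullback.snd b (T.ε B') ≫ inv zb) ≫ ζ = 𝟙 _ := by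
      rw [← cancel_epi ζ, ← Category.assoc, hζr, Category.id_comp, Category.comp_id]
    haveI : IsIso ζ := ⟨pullback.snd b (T.ε B') ≫ inv zb, hζr, hrζ⟩
    have pbε : IsPullback (T.ε B) zb b (T.ε B') :=
      IsPullback.of_iso_pullback ⟨wζ⟩ (asIso ζ) hζfst hζsnd
    exact hP2 zb (T.ε B) (T.ε B') b pbε.flip inferInstance
  · -- mono b ⇒ pullback
    intro hb
    haveI := hb
    haveI hk'm : Mono k' := IsZKernel.mono T hk'
    obtain ⟨W, hW, p, i, hpi⟩ := hk'.1
    obtain ⟨ψ, hψ, -⟩ := T.zlift (T.zpart B') B' (T.ε B') (T.ε_mono B') (T.zpart_mem B') W i hW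
    have key : ∀ (X : C) (x : X ⟶ A) (y : X ⟶ K'), x ≫ a = y ≫ k' → InNZ T (x ≫ f) := by
      intro X x y hxy
      refine ⟨T.zpart B, T.zpart_mem B, y ≫ p ≫ ψ ≫ inv zb, T.ε B, ?_⟩
      rw [← cancel_mono b]
      calc ((y ≫ p ≫ ψ ≫ inv zb) ≫ T.ε B) ≫ b
          = y ≫ p ≫ ψ ≫ inv zb ≫ (T.ε B ≫ b) := by simp only [Category.assoc]
        _ = y ≫ p ≫ ψ ≫ inv zb ≫ zb ≫ T.ε B' := by rw [← hzb]
        _ = y ≫ p ≫ ψ ≫ T.ε B' := by rw [IsIso.inv_hom_id_assoc]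
        _ = y ≫ p ≫ i := by rw [hψ]
        _ = y ≫ (k' ≫ f') := by rw [hpi]
        _ = (y ≫ k') ≫ f' := by rw [Category.assoc]
        _ = (x ≫ a) ≫ f' := by rw [hxy]
        _ = x ≫ (f ≫ b) := by rw [Category.assoc, ← hsq2]
        _ = (x ≫ f) ≫ b := by rw [Category.assoc]
    apply IsPullback.of_isLimit (PullbackCone.IsLimit.mk hsq1
      (fun s => (hrow.2.2 s.pt s.fst (key s.pt s.fst s.snd s.condition)).choose)
      (fun s => (hrow.2.2 s.pt s.fst (key s.pt s.fst s.snd s.condition)).choose_spec.1)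
      ?_ ?_)
    · intro s
      rw [← cancel_mono k']
      have h1 := (hrow.2.2 s.pt s.fst (key s.pt s.fst s.snd s.condition)).choose_spec.1
      rw [Category.assoc, ← hsq1, ← Category.assoc, h1, s.condition]
    · intro s m hm _
      exact (hrow.2.2 s.pt s.fst (key s.pt s.fst s.snd s.condition)).choose_spec.2 m hm
end

section
/- Consider a commutative diagram in C with rows K → A → B (morphisms k, f) and K' → A' → B' (morphisms k', f') and vertical morphisms u : K → K', a : A → A', b : B → B' (with a∘k = k'∘u and b∘f = f'∘a), in which both rows are short Z-exact sequences. If u and b are regular epimorphisms, then a is a regular epimorphism. -/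
open CategoryTheory CategoryTheory.Limits

universe v u

variable {C : Type u} [Category.{v} C]

/-- Composing a regular epimorphism with an isomorphism yields a regular epimorphism. -/
noncomputable def regularEpiCompIsoAux {X Y Z : C} (p : X ⟶ Y) (i : Y ⟶ Z) (hp : RegularEpi p)
    [IsIso i] : RegularEpi (p ≫ i) where
  W := hp.W
  left := hp.left
  right := hp.right
  w := by rw [← Category.assoc, hp.w, Category.assoc]
  isColimit := by
    refine Cofork.IsColimit.mk _ (fun s => inv i ≫ Cofork.IsColimit.desc hp.isColimit s.π s.condition) (fun s => ?_) (fun s m hm => ?_)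
    · have h := Cofork.IsColimit.π_desc' hp.isColimit s.π s.condition
      simp only [Cofork.π_ofπ] at h ⊢
      rw [Category.assoc, IsIso.hom_inv_id_assoc, h]
    · have h := Cofork.IsColimit.π_desc' hp.isColimit s.π s.condition
      simp only [Cofork.π_ofπ] at hm h
      rw [← IsIso.inv_hom_id_assoc (f := i) m]
      congr 1
      apply Cofork.IsColimit.hom_ext hp.isColimit
      simp only [Cofork.π_ofπ]
      rw [h, ← hm, Category.assoc]


/-- In the presence of regular epi–mono factorisations, every strong epimorphism is a
regular epimorphism. -/
theorem regularEpi_of_strongEpi (hfact : RegEpiMonoFact C) {X Y : C} (f : X ⟶ Y)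
    (hf : StrongEpi f) : Nonempty (RegularEpi f) := by
  obtain ⟨I, p, i, ⟨hp⟩, hi, heq⟩ := hfact f
  haveI := hp; haveI := hi
  haveI : StrongEpi (p ≫ i) := heq ▸ hf
  haveI : StrongEpi i := strongEpi_of_strongEpi p i
  haveI : IsIso i := isIso_of_mono_of_strongEpi i
  exact ⟨heq ▸ regularEpiCompIsoAux p i hp⟩

/-- Short five lemma for regular epimorphisms: given a morphism of short
`Z`-exact sequences `(u, a, b)`, if `u` and `b` are regular epimorphisms then so
is `a`. -/
theorem statement14 [HasFiniteLimits C]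
    (hfact : RegEpiMonoFact C) (hstab : RegEpiPullbackStable C) (hP1 : ProtoP1 C)
    (T : TrivialObjects C)
    {K A B K' A' B' : C} (k : K ⟶ A) (f : A ⟶ B) (k' : K' ⟶ A') (f' : A' ⟶ B')
    (u : K ⟶ K') (a : A ⟶ A') (b : B ⟶ B')
    (hsq1 : k ≫ a = u ≫ k') (hsq2 : f ≫ b = a ≫ f')
    (hrow : ShortZExact T k f) (hrow' : ShortZExact T k' f')
    (hu : Nonempty (RegularEpi u)) (hb : Nonempty (RegularEpi b)) :
    Nonempty (RegularEpi a) := by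
  obtain ⟨hf, _, _⟩ := hrow
  obtain ⟨hf', hk'NZ, hk'Univ⟩ := hrow'
  obtain ⟨I, p, i, ⟨hp⟩, hi, heq⟩ := hfact a
  haveI := isRegularEpi_of_regularEpi hp; haveI := hi
  haveI := isRegularEpi_of_regularEpi hf.some; haveI := isRegularEpi_of_regularEpi hb.some
  haveI huRE := hu.some
  haveI := RegularEpi.epi u huRE
  -- `e := i ≫ f'` is a strong (hence regular) epimorphism
  have hpe : f ≫ b = p ≫ (i ≫ f') := by rw [hsq2, ← heq, Category.assoc]
  haveI hse : StrongEpi (p ≫ (i ≫ f')) := hpe ▸ strongEpi_comp f b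
  haveI heSE : StrongEpi (i ≫ f') := strongEpi_of_strongEpi p (i ≫ f')
  have heRE : Nonempty (RegularEpi (i ≫ f')) := regularEpi_of_strongEpi hfact _ heSE
  -- construct κ : K' ⟶ I with u ≫ κ = k ≫ p and κ ≫ i = k'
  have hcoeq : huRE.left ≫ (k ≫ p) = huRE.right ≫ (k ≫ p) := by
    rw [← cancel_mono i]
    simp only [Category.assoc, heq, hsq1]
    rw [← Category.assoc, ← Category.assoc, huRE.w]
  let κ : K' ⟶ I := Cofork.IsColimit.desc huRE.isColimit (k ≫ p) hcoeq
  have hκu : u ≫ κ = k ≫ p := by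
    have := Cofork.IsColimit.π_desc' huRE.isColimit (k ≫ p) hcoeq
    simpa using this
  have hκi : κ ≫ i = k' := by
    rw [← cancel_epi u, ← Category.assoc, hκu, Category.assoc, heq, hsq1]
  -- factor k' ≫ f' through the trivial subobject of B'
  obtain ⟨W₀, hW₀, p₀, ι₀, hfac₀⟩ := hk'NZ
  obtain ⟨φ₀, hφ₀, -⟩ := T.zlift (T.zpart B') B' (T.ε B') (T.ε_mono B') (T.zpart_mem B')
    W₀ ι₀ hW₀
  haveI hεm : Mono (T.ε B') := T.ε_mono B'
  set q : K' ⟶ T.zpart B' := p₀ ≫ φ₀ with hq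
  have hqε : q ≫ T.ε B' = k' ≫ f' := by rw [hq, Category.assoc, hφ₀, hfac₀]
  -- the outer rectangle is a pullback
  have hout : IsPullback k' q f' (T.ε B') := by
    have w : k' ≫ f' = q ≫ T.ε B' := hqε.symm
    refine IsPullback.of_isLimit (PullbackCone.IsLimit.mk w
      (fun s => ?_) (fun s => ?_) (fun s => ?_) (fun s m hm1 hm2 => ?_)) <;>
      [skip; skip; skip; skip]
    all_goals {
      first
      | exact (hk'Univ s.pt s.fst ⟨T.zpart B', T.zpart_mem B', s.snd, T.ε B',
          s.condition.symm⟩).choose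
      | {
          have hc := hk'Univ s.pt s.fst ⟨T.zpart B', T.zpart_mem B', s.snd, T.ε B',
            s.condition.symm⟩
          first
          | exact hc.choose_spec.1
          | { rw [← cancel_mono (T.ε B'), Category.assoc, hqε, ← Category.assoc,
                hc.choose_spec.1, s.condition] }
          | exact hc.choose_spec.2 m hm1
        }
    }
  -- the left square is a pullback
  have hleft : IsPullback κ q (i ≫ f') (T.ε B') := by
    have w : κ ≫ (i ≫ f') = q ≫ T.ε B' := by
      rw [← Category.assoc, hκi, hqε]
    refine IsPullback.of_isLimit (PullbackCone.IsLimit.mk w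
      (fun s => ?_) (fun s => ?_) (fun s => ?_) (fun s m hm1 hm2 => ?_))
    case' _ =>
      exact (hk'Univ s.pt (s.fst ≫ i) ⟨T.zpart B', T.zpart_mem B', s.snd, T.ε B',
        by rw [Category.assoc, ← s.condition]⟩).choose
    all_goals
      have hc := hk'Univ s.pt (s.fst ≫ i) ⟨T.zpart B', T.zpart_mem B', s.snd, T.ε B',
        by rw [Category.assoc, ← s.condition]⟩
    · rw [← cancel_mono i, Category.assoc, hκi, hc.choose_spec.1]
    · rw [← cancel_mono (T.ε B'), Category.assoc, hqε, ← Category.assoc,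
        hc.choose_spec.1, Category.assoc, ← s.condition]
    · refine hc.choose_spec.2 m ?_
      show m ≫ k' = s.fst ≫ i
      rw [← hκi, ← Category.assoc, hm1]
  -- apply protomodularity (P1)
  have hright : IsPullback i (i ≫ f') f' (𝟙 B') := by
    have hout' : IsPullback (κ ≫ i) q f' (T.ε B' ≫ 𝟙 B') := by
      rw [hκi, Category.comp_id]; exact hout
    exact hP1 κ i (T.ε B') (𝟙 B') q (i ≫ f') f' (by simp) hleft hout' heRE
  -- hence i is a split epi, and being mono, an iso
  haveI : IsSplitEpi i :=
    ⟨⟨⟨hright.lift (𝟙 A') f' (by simp), hright.lift_fst (𝟙 A') f' (by simp)⟩⟩⟩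
  haveI : IsIso i := isIso_of_mono_of_isSplitEpi i
  haveI : StrongEpi p := inferInstance
  have : StrongEpi a := heq ▸ strongEpi_comp p i
  exact regularEpi_of_strongEpi hfact a this
end

section
/- Consider a commutative diagram in C with rows K → A → B (morphisms k, f) and K' → A' → B' (morphisms k', f') and vertical morphisms u : K → K', a : A → A', b : B → B' (with a∘k = k'∘u and b∘f = f'∘a), in which both rows are short Z-exact sequences. If u and b are monomorphisms, then a is a monomorphism. -/
open CategoryTheory CategoryTheory.Limits

universe v u

variable {C : Type u} [Category.{v} C]

lemma zkernel_mono (T : TrivialObjects C) {K A B : C} (k : K ⟶ A) (f : A ⟶ B)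
    (h : IsZKernel T k f) : Mono k := by
  constructor
  intro E g g' hgg
  obtain ⟨W, hW, p, i, hpi⟩ := h.1
  have hnz : InNZ T ((g ≫ k) ≫ f) :=
    ⟨W, hW, g ≫ p, i, by rw [Category.assoc, hpi, Category.assoc]⟩
  obtain ⟨φ, hφ, huniq⟩ := h.2 E (g ≫ k) hnz
  rw [huniq g rfl, huniq g' hgg.symm]

lemma nz_cancel (T : TrivialObjects C) {A B B' : C} (g : A ⟶ B) (b : B ⟶ B')
    (hb : Mono b) (h : InNZ T (g ≫ b)) : InNZ T g := by
  obtain ⟨W, hW, p, i, hpi⟩ := h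
  haveI := T.ε_mono B
  obtain ⟨φ, hφ, -⟩ := T.zlift (T.zpart B) B' (T.ε B ≫ b)
    (mono_comp _ _) (T.zpart_mem B) W i hW
  refine ⟨T.zpart B, T.zpart_mem B, p ≫ φ, T.ε B, ?_⟩
  have : ((p ≫ φ) ≫ T.ε B) ≫ b = g ≫ b := by
    rw [Category.assoc, Category.assoc, hφ]
    exact hpi
  exact (cancel_mono b).1 this

/-- Short five lemma for monomorphisms: given a morphism of short `Z`-exact
sequences `(u, a, b)`, if `u` and `b` are monomorphisms then so is `a`. -/
theorem statement15 [HasFiniteLimits C]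
    (hfact : RegEpiMonoFact C) (hstab : RegEpiPullbackStable C) (hP2 : ProtoP2 C)
    (T : TrivialObjects C)
    {K A B K' A' B' : C} (k : K ⟶ A) (f : A ⟶ B) (k' : K' ⟶ A') (f' : A' ⟶ B')
    (u : K ⟶ K') (a : A ⟶ A') (b : B ⟶ B')
    (hsq1 : k ≫ a = u ≫ k') (hsq2 : f ≫ b = a ≫ f')
    (hrow : ShortZExact T k f) (hrow' : ShortZExact T k' f')
    (hu : Mono u) (hb : Mono b) :
    Mono a := by
  haveI hk'mono : Mono k' := zkernel_mono T k' f' hrow'.2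
  haveI hkmono : Mono k := zkernel_mono T k f hrow.2
  have eq : u ≫ k' = k ≫ a := hsq1.symm
  have lift : ∀ s : PullbackCone k' a, { φ : s.pt ⟶ K // φ ≫ k = s.snd } := by
    intro s
    have hnz : InNZ T (s.snd ≫ f) := by
      apply nz_cancel T _ b hb
      obtain ⟨W, hW, p, i, hpi⟩ := hrow'.2.1
      refine ⟨W, hW, s.fst ≫ p, i, ?_⟩
      rw [Category.assoc, hpi, Category.assoc, hsq2, ← Category.assoc, ← Category.assoc,
        s.condition]
    exact ⟨(hrow.2.2 s.pt s.snd hnz).choose, (hrow.2.2 s.pt s.snd hnz).choose_spec.1⟩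
  have hlim : IsLimit (PullbackCone.mk u k eq) := by
    apply PullbackCone.IsLimit.mk eq (fun s => (lift s).1)
    · intro s
      rw [← cancel_mono k']
      rw [Category.assoc, eq, ← Category.assoc, (lift s).2, s.condition]
    · intro s
      exact (lift s).2
    · intro s m h1 h2
      rw [← cancel_mono k, (lift s).2, h2]
  exact hP2 u k k' a (IsPullback.of_isLimit hlim) hu
end

section
/- Consider a commutative diagram in C consisting of: a top row A --f--> B; a middle row K' --k'--> A' --f'--> B'; a bottom row K'' --k''--> A'' --f''--> B''; and vertical morphisms a : A → A', b : B → B', u : K' → K'', a' : A' → A'', b' : B' → B'' making all squares commute. Assume the middle and bottom rows are short Z-exact sequences, the columns A → A' → A'' and B → B' → B'' are short Z-exact sequences (i.e. a is a Z-kernel of the regular epimorphism a', and b is a Z-kernel of the regular epimorphism b'), and the induced morphisms Z(b') : Z(B') → Z(B'') and Z(f'') : Z(A'') → Z(B'') between zero parts are isomorphisms. If u is a regular epimorphism, then f is a regular epimorphism. -/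
open CategoryTheory CategoryTheory.Limits

universe v u

variable {C : Type u} [Category.{v} C]

/-! ### Auxiliary lemmas -/

lemma InNZ_postcomp (T : TrivialObjects C) {X Y Z' : C} {f : X ⟶ Y} (h : Y ⟶ Z')
    (hf : InNZ T f) : InNZ T (f ≫ h) := by
  obtain ⟨W, hW, p, i, hpi⟩ := hf
  exact ⟨W, hW, p, i ≫ h, by rw [← Category.assoc, hpi]⟩

lemma InNZ_factor (T : TrivialObjects C) {X Y : C} {f : X ⟶ Y} (hf : InNZ T f) :
    ∃ q : X ⟶ T.zpart Y, q ≫ T.ε Y = f := by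
  obtain ⟨W, hW, p, i, hpi⟩ := hf
  obtain ⟨φ, hφ, -⟩ := T.zlift (T.zpart Y) Y (T.ε Y) (T.ε_mono Y) (T.zpart_mem Y) W i hW
  exact ⟨p ≫ φ, by rw [Category.assoc, hφ, hpi]⟩

lemma zker_mono {T : TrivialObjects C} {K X Y : C} {k : K ⟶ X} {f : X ⟶ Y}
    (h : IsZKernel T k f) : Mono k := by
  constructor
  intro E g₁ g₂ hg
  obtain ⟨W, hW, p, i, hpi⟩ := h.1
  have h1 : InNZ T ((g₁ ≫ k) ≫ f) :=
    ⟨W, hW, g₁ ≫ p, i, by rw [Category.assoc, hpi, ← Category.assoc]⟩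
  obtain ⟨φ, hφ, huniq⟩ := h.2 _ (g₁ ≫ k) h1
  rw [huniq g₁ rfl, huniq g₂ hg.symm]

/-- A regular epimorphism composed with an isomorphism is a regular epimorphism. -/
noncomputable def regularEpiCompIso {X Y Z' : C} (p : X ⟶ Y) (hp : RegularEpi p)
    (i : Y ⟶ Z') [IsIso i] : RegularEpi (p ≫ i) where
  W := hp.W
  left := hp.left
  right := hp.right
  w := by rw [← Category.assoc, ← Category.assoc, hp.w]
  isColimit := by
    refine Cofork.IsColimit.mk _
      (fun s => inv i ≫ Cofork.IsColimit.desc hp.isColimit s.π s.condition)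
      (fun s => ?_) (fun s m hm => ?_)
    · have hd : p ≫ Cofork.IsColimit.desc hp.isColimit s.π s.condition = s.π := by
        simpa using Cofork.IsColimit.π_desc' hp.isColimit s.π s.condition
      rw [Cofork.π_ofπ, Category.assoc, IsIso.hom_inv_id_assoc]
      exact hd
    · have hd : p ≫ Cofork.IsColimit.desc hp.isColimit s.π s.condition = s.π := by
        simpa using Cofork.IsColimit.π_desc' hp.isColimit s.π s.condition
      rw [Cofork.π_ofπ] at hm
      have h1 : i ≫ m = Cofork.IsColimit.desc hp.isColimit s.π s.condition := by
        haveI := RegularEpi.epi p hp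
        rw [← cancel_epi p, ← Category.assoc, hm, hd]
      rw [← h1, IsIso.inv_hom_id_assoc]

/-- If some composite `c ≫ g` is a regular epimorphism, then (in the presence of
regular epi-mono factorizations) `g` is a regular epimorphism. -/
lemma regEpi_of_comp (hfact : RegEpiMonoFact C) {V X Y : C} (c : V ⟶ X) (g : X ⟶ Y)
    (h : Nonempty (RegularEpi (c ≫ g))) : Nonempty (RegularEpi g) := by
  obtain ⟨I, p, i, ⟨hp⟩, hi, hpi⟩ := hfact g
  haveI := h.some
  have hse : StrongEpi (c ≫ g) := by
    have := isRegularEpi_of_regularEpi h.some; infer_instance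
  have heq : (c ≫ p) ≫ i = c ≫ g := by rw [Category.assoc, hpi]
  haveI : StrongEpi ((c ≫ p) ≫ i) := by rw [heq]; exact hse
  haveI : StrongEpi i := strongEpi_of_strongEpi (c ≫ p) i
  haveI : Mono i := hi
  haveI : IsIso i := isIso_of_mono_of_strongEpi i
  haveI := hp
  exact ⟨hpi ▸ regularEpiCompIso p hp i⟩

/-- To establish a pullback square in which `fst` and `g` are monomorphisms, it is
enough to construct, for each commuting cone, a lift compatible with `fst`. -/
lemma isPullback_of_mono_lift {P X Y W : C} {fst : P ⟶ X} {snd : P ⟶ Y} {f : X ⟶ W}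
    {g : Y ⟶ W} (hfst : Mono fst) (hg : Mono g) (comm : fst ≫ f = snd ≫ g)
    (create : ∀ {T : C} (h : T ⟶ X), (∃ k : T ⟶ Y, h ≫ f = k ≫ g) →
      {l : T ⟶ P // l ≫ fst = h}) :
    IsPullback fst snd f g := by
  haveI := hfst; haveI := hg
  refine IsPullback.of_isLimit (PullbackCone.IsLimit.mk comm
    (fun s => (create s.fst ⟨s.snd, s.condition⟩).1)
    (fun s => (create s.fst ⟨s.snd, s.condition⟩).2)
    (fun s => ?_) (fun s m h1 h2 => ?_))
  · rw [← cancel_mono g, Category.assoc, ← comm, ← Category.assoc,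
      (create s.fst ⟨s.snd, s.condition⟩).2, s.condition]
  · rw [← cancel_mono fst, h1, (create s.fst ⟨s.snd, s.condition⟩).2]

/-- Given a commutative diagram with top row `A --f--> B`, middle row
`K' --k'--> A' --f'--> B'`, bottom row `K'' --k''--> A'' --f''--> B''`, and
vertical morphisms `a, b, u, a', b'`, in which the middle and bottom rows and
the columns `A → A' → A''` and `B → B' → B''` are short `Z`-exact sequences, and
`Z(b')` and `Z(f'')` are isomorphisms: if `u` is a regular epimorphism then so
is `f`. -/
theorem statement16 [HasFiniteLimits C]
    (hfact : RegEpiMonoFact C) (hstab : RegEpiPullbackStable C)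
    (hP1 : ProtoP1 C) (hP2 : ProtoP2 C) (T : TrivialObjects C)
    {A B K' A' B' K'' A'' B'' : C}
    (f : A ⟶ B)
    (k' : K' ⟶ A') (f' : A' ⟶ B') (k'' : K'' ⟶ A'') (f'' : A'' ⟶ B'')
    (a : A ⟶ A') (b : B ⟶ B') (u : K' ⟶ K'') (a' : A' ⟶ A'') (b' : B' ⟶ B'')
    (hsq1 : f ≫ b = a ≫ f') (hsq2 : k' ≫ a' = u ≫ k'') (hsq3 : f' ≫ b' = a' ≫ f'')
    (hrow' : ShortZExact T k' f') (hrow'' : ShortZExact T k'' f'')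
    (hcolA : ShortZExact T a a') (hcolB : ShortZExact T b b')
    (hZb' : ∃ z : T.zpart B' ⟶ T.zpart B'', z ≫ T.ε B'' = T.ε B' ≫ b' ∧ IsIso z)
    (hZf'' : ∃ z : T.zpart A'' ⟶ T.zpart B'', z ≫ T.ε B'' = T.ε A'' ≫ f'' ∧ IsIso z)
    (hu : Nonempty (RegularEpi u)) :
    Nonempty (RegularEpi f) := by
  classical
  obtain ⟨z1, hz1, hz1iso⟩ := hZb'
  obtain ⟨z2, hz2, hz2iso⟩ := hZf''
  haveI := hz1iso; haveI := hz2iso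
  haveI := T.ε_mono B'; haveI := T.ε_mono B''; haveI := T.ε_mono A''
  have hbmono : Mono b := zker_mono hcolB.2
  have hk''mono : Mono k'' := zker_mono hrow''.2
  -- the pullback `P = B' ×_{B''} A''`
  obtain ⟨P, π₁, π₂, hD⟩ : ∃ (P : C) (π₁ : P ⟶ B') (π₂ : P ⟶ A''), IsPullback π₁ π₂ b' f'' :=
    ⟨_, _, _, IsPullback.of_hasPullback b' f''⟩
  have hπ₁re : Nonempty (RegularEpi π₁) := hstab π₁ π₂ b' f'' hD hrow''.1
  -- the comparison morphism `ρ : A' ⟶ P`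
  obtain ⟨ρ, hρπ₁, hρπ₂⟩ : ∃ ρ : A' ⟶ P, ρ ≫ π₁ = f' ∧ ρ ≫ π₂ = a' :=
    ⟨hD.lift f' a' hsq3, hD.lift_fst _ _ _, hD.lift_snd _ _ _⟩
  -- the `Z`-kernel `κ : K'' ⟶ P` of `π₁`
  obtain ⟨q'', hq''⟩ := InNZ_factor T hrow''.2.1
  obtain ⟨w₀, hw₀⟩ : ∃ w₀ : K'' ⟶ T.zpart B', w₀ ≫ T.ε B' ≫ b' = k'' ≫ f'' :=
    ⟨q'' ≫ inv z1, by rw [Category.assoc, ← hz1, IsIso.inv_hom_id_assoc, hq'']⟩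
  obtain ⟨κ, hκπ₁, hκπ₂⟩ : ∃ κ : K'' ⟶ P, κ ≫ π₁ = w₀ ≫ T.ε B' ∧ κ ≫ π₂ = k'' :=
    ⟨hD.lift (w₀ ≫ T.ε B') k'' (by rw [Category.assoc]; exact hw₀),
      hD.lift_fst _ _ _, hD.lift_snd _ _ _⟩
  have hκmono : Mono κ := by
    haveI : Mono (κ ≫ π₂) := by rw [hκπ₂]; exact hk''mono
    exact mono_of_mono κ π₂
  -- cancellation property coming from the isomorphism `Z(b')`
  have cancelz : ∀ {E : C} (x y : E ⟶ T.zpart B'),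
      x ≫ T.ε B' ≫ b' = y ≫ T.ε B' ≫ b' → x = y := by
    intro E x y hxy
    rw [← hz1] at hxy
    have h2 : x ≫ z1 = y ≫ z1 := by
      rw [← cancel_mono (T.ε B'')]
      simpa [Category.assoc] using hxy
    calc x = (x ≫ z1) ≫ inv z1 := by rw [Category.assoc, IsIso.hom_inv_id, Category.comp_id]
    _ = (y ≫ z1) ≫ inv z1 := by rw [h2]
    _ = y := by rw [Category.assoc, IsIso.hom_inv_id, Category.comp_id]
  -- `κ` is a `Z`-kernel of `π₁`
  have hκker : ∀ (E : C) (e : E ⟶ P), InNZ T (e ≫ π₁) → ∃! φ : E ⟶ K'', φ ≫ κ = e := by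
    intro E e he
    have h2 : InNZ T ((e ≫ π₂) ≫ f'') := by
      have h3 : (e ≫ π₂) ≫ f'' = (e ≫ π₁) ≫ b' := by
        rw [Category.assoc, Category.assoc, hD.w]
      rw [h3]; exact InNZ_postcomp T b' he
    obtain ⟨ψ, hψ, -⟩ := hrow''.2.2 E (e ≫ π₂) h2
    obtain ⟨α, hα⟩ := InNZ_factor T he
    have hψw : ψ ≫ w₀ = α := by
      apply cancelz
      rw [Category.assoc, hw₀, ← Category.assoc, hψ, Category.assoc, ← hD.w,
        ← Category.assoc, ← hα, Category.assoc]
    have hψκ : ψ ≫ κ = e := by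
      apply hD.hom_ext
      · rw [Category.assoc, hκπ₁, ← Category.assoc, hψw, hα]
      · rw [Category.assoc, hκπ₂, hψ]
    exact ⟨ψ, hψκ, fun φ' hφ' => by rw [← cancel_mono κ, hφ', hψκ]⟩
  -- `u ≫ κ = k' ≫ ρ`
  obtain ⟨α', hα'⟩ := InNZ_factor T hrow'.2.1
  have huw : u ≫ w₀ = α' := by
    apply cancelz
    rw [Category.assoc, hw₀, ← Category.assoc, ← hsq2, Category.assoc, ← hsq3,
      ← Category.assoc, ← hα', Category.assoc]
  have huκ : u ≫ κ = k' ≫ ρ := by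
    apply hD.hom_ext
    · rw [Category.assoc, hκπ₁, ← Category.assoc, huw, hα', Category.assoc, hρπ₁]
    · rw [Category.assoc, hκπ₂, Category.assoc, hρπ₂, hsq2]
  -- factor `ρ` as a regular epi followed by a mono
  obtain ⟨M, ρ₁, j, ⟨hρ₁reg⟩, hjmono, hρfac⟩ := hfact ρ
  haveI := hjmono
  have hjπ₁re : Nonempty (RegularEpi (j ≫ π₁)) := by
    apply regEpi_of_comp hfact ρ₁ (j ≫ π₁)
    have h4 : ρ₁ ≫ j ≫ π₁ = f' := by rw [← Category.assoc, hρfac, hρπ₁]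
    rw [h4]; exact hrow'.1
  -- lift `κ` through `j` using the lifting property of the regular epi `u`
  haveI : RegularEpi u := hu.some
  haveI : StrongEpi u := by
    have := isRegularEpi_of_regularEpi hu.some; infer_instance
  have sq : CommSq (k' ≫ ρ₁) u j κ := ⟨by rw [Category.assoc, hρfac, ← huκ]⟩
  obtain ⟨d, hd₂⟩ : ∃ d : K'' ⟶ M, d ≫ j = κ := ⟨sq.lift, sq.fac_right⟩
  have hdmono : Mono d := by
    haveI : Mono (d ≫ j) := by rw [hd₂]; exact hκmono
    exact mono_of_mono d j
  -- the two pullback squares expressing `κ` and `d` as `Z`-kernels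
  have hPBκ : IsPullback κ w₀ π₁ (T.ε B') := by
    apply isPullback_of_mono_lift hκmono (T.ε_mono B') hκπ₁
    intro T' h hk
    have hin : InNZ T (h ≫ π₁) := ⟨_, T.zpart_mem B', hk.choose, T.ε B', hk.choose_spec.symm⟩
    exact ⟨(hκker T' h hin).exists.choose, (hκker T' h hin).exists.choose_spec⟩
  have hPBd : IsPullback d w₀ (j ≫ π₁) (T.ε B') := by
    apply isPullback_of_mono_lift hdmono (T.ε_mono B') (by rw [← Category.assoc, hd₂, hκπ₁])
    intro T' h hk
    have hin : InNZ T ((h ≫ j) ≫ π₁) :=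
      ⟨_, T.zpart_mem B', hk.choose, T.ε B', by rw [Category.assoc]; exact hk.choose_spec.symm⟩
    refine ⟨(hκker T' (h ≫ j) hin).exists.choose, ?_⟩
    have hφ := (hκker T' (h ≫ j) hin).exists.choose_spec
    rw [← cancel_mono j, Category.assoc, hd₂, hφ]
  -- protomodularity (P1) forces `j` to be an isomorphism
  have houter : IsPullback (d ≫ j) w₀ π₁ (T.ε B' ≫ 𝟙 B') := by
    rw [hd₂, Category.comp_id]; exact hPBκ
  have hP1res : IsPullback j (j ≫ π₁) π₁ (𝟙 B') :=
    hP1 d j (T.ε B') (𝟙 B') w₀ (j ≫ π₁) π₁ (Category.comp_id _).symm hPBd houter hjπ₁re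
  obtain ⟨hl, hlj⟩ : ∃ l : P ⟶ M, l ≫ j = 𝟙 P :=
    ⟨hP1res.lift (𝟙 P) π₁ (by rw [Category.id_comp, Category.comp_id]),
      hP1res.lift_fst _ _ _⟩
  haveI : IsIso j :=
    ⟨hl, by rw [← cancel_mono j, Category.assoc, hlj, Category.comp_id, Category.id_comp], hlj⟩
  -- hence `ρ` is a regular epimorphism
  have hρre : Nonempty (RegularEpi ρ) := by
    haveI := hρ₁reg
    exact ⟨by rw [← hρfac]; exact regularEpiCompIso ρ₁ hρ₁reg j⟩
  -- the morphism `δ : B ⟶ P` using the isomorphism `Z(f'')`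
  obtain ⟨qB, hqB⟩ := InNZ_factor T hcolB.2.1
  obtain ⟨x, hm⟩ : ∃ x : B ⟶ T.zpart A'', (x ≫ T.ε A'') ≫ f'' = b ≫ b' :=
    ⟨qB ≫ inv z2, by rw [Category.assoc, Category.assoc, ← hz2, IsIso.inv_hom_id_assoc, hqB]⟩
  obtain ⟨δ, hδπ₁, hδπ₂⟩ : ∃ δ : B ⟶ P, δ ≫ π₁ = b ∧ δ ≫ π₂ = x ≫ T.ε A'' :=
    ⟨hD.lift b (x ≫ T.ε A'') hm.symm, hD.lift_fst _ _ _, hD.lift_snd _ _ _⟩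
  -- pull `ρ` back along `δ` to get a regular epi cover of `B` factoring through `f`
  obtain ⟨E, r, s, hE⟩ : ∃ (E : C) (r : E ⟶ B) (s : E ⟶ A'), IsPullback r s δ ρ :=
    ⟨_, _, _, IsPullback.of_hasPullback δ ρ⟩
  have hrre : Nonempty (RegularEpi r) := hstab r s δ ρ hE hρre
  have hsa' : InNZ T (s ≫ a') := by
    have h5 : s ≫ a' = (r ≫ x) ≫ T.ε A'' := by
      rw [← hρπ₂, ← Category.assoc, ← hE.w, Category.assoc, hδπ₂]
      simp only [Category.assoc]
    rw [h5]
    exact ⟨_, T.zpart_mem A'', r ≫ x, T.ε A'', rfl⟩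
  obtain ⟨t, ht, -⟩ := hcolA.2.2 E s hsa'
  have htf : t ≫ f = r := by
    rw [← cancel_mono b, Category.assoc, hsq1, ← Category.assoc, ht, ← hρπ₁,
      ← Category.assoc, ← hE.w, Category.assoc, hδπ₁]
  exact regEpi_of_comp hfact t f (by rw [htf]; exact hrre)
end
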